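/- An n-qubit unitary U in C_k is semi-Clifford if and only if the intersection (U P_n U†) ∩ P_n contains a maximal abelian subgroup of P_n. -/

import Mathlib

/-! Label an `n`-qubit Pauli operator, up to its phase, by its vector in `(𝔽₂ × 𝔽₂)ⁿ`. Two Pauli
operators commute iff their labels are orthogonal for the standard symplectic form, so an abelian
subgroup of the Pauli group has an isotropic label space, and a maximal abelian one consists of
all phases times the Paulis of a Lagrangian label space.

If `G ⊆ U P U† ∩ P` is maximal abelian, then `H = U† G U` is an abelian subgroup of the Pauli
group, closed under phases. Conjugation is injective, so the label space of `H` is an isotropic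
subspace at least as large as the Lagrangian label space of `G`; hence it is Lagrangian, `H` is
maximal abelian, and `U H U† = G` shows that `U` is semi-Clifford. The converse is immediate. -/

open Matrix Complex

/-- Index type for `n`-qubit computational basis states. -/
abbrev Q (n : ℕ) := Fin n → Fin 2

/-- The four single-qubit Pauli matrices I, X, Y, Z. -/
noncomputable def pauli1 : Fin 4 → Matrix (Fin 2) (Fin 2) ℂ :=
  ![1, !![0, 1; 1, 0], !![0, -Complex.I; Complex.I, 0], !![1, 0; 0, -1]]

/-- The tensor product of `n` single-qubit operators. -/
noncomputable def tensorOp {n : ℕ} (f : Fin n → Matrix (Fin 2) (Fin 2) ℂ) :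
    Matrix (Q n) (Q n) ℂ :=
  Matrix.of fun x y => ∏ i, f i (x i) (y i)

/-- The `n`-qubit Pauli group: tensor products of Pauli matrices with phases ±1, ±i. -/
noncomputable def PauliGroup (n : ℕ) : Set (Matrix (Q n) (Q n) ℂ) :=
  { M | ∃ (s : Fin 4) (f : Fin n → Fin 4),
      M = Complex.I ^ (s : ℕ) • tensorOp fun i => pauli1 (f i) }

/-- The Clifford hierarchy: `Ck n 1` is the Pauli group and
`Ck n (k+1) = {U unitary : U P U† ∈ Ck n k for all Paulis P}`. -/
noncomputable def Ck (n : ℕ) : ℕ → Set (Matrix (Q n) (Q n) ℂ)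
  | 0 => PauliGroup n
  | 1 => PauliGroup n
  | (k + 2) => { U | U ∈ Matrix.unitaryGroup (Q n) ℂ ∧
      ∀ P ∈ PauliGroup n, U * P * Uᴴ ∈ Ck n (k + 1) }

/-- A subgroup of the `n`-qubit Pauli group (given as a set of matrices closed
under the group operations; inverses of Paulis are conjugate transposes). -/
noncomputable def IsPauliSubgroup (n : ℕ) (G : Set (Matrix (Q n) (Q n) ℂ)) : Prop :=
  G ⊆ PauliGroup n ∧ (1 : Matrix (Q n) (Q n) ℂ) ∈ G ∧
    (∀ A ∈ G, ∀ B ∈ G, A * B ∈ G) ∧ (∀ A ∈ G, Aᴴ ∈ G)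

/-- A maximal abelian subgroup of the `n`-qubit Pauli group. -/
noncomputable def IsMaxAbelian (n : ℕ) (G : Set (Matrix (Q n) (Q n) ℂ)) : Prop :=
  IsPauliSubgroup n G ∧ (∀ A ∈ G, ∀ B ∈ G, A * B = B * A) ∧
    ∀ G', IsPauliSubgroup n G' → (∀ A ∈ G', ∀ B ∈ G', A * B = B * A) →
      G ⊆ G' → G' ⊆ G

/-- A semi-Clifford operation: a unitary sending by conjugation some maximal
abelian subgroup of the Pauli group onto another maximal abelian subgroup. -/
noncomputable def SemiClifford (n : ℕ) (R : Matrix (Q n) (Q n) ℂ) : Prop :=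
  R ∈ Matrix.unitaryGroup (Q n) ℂ ∧
    ∃ G, IsMaxAbelian n G ∧ IsMaxAbelian n ((fun A => R * A * Rᴴ) '' G)

lemma AddChar.map_sum_eq_prod {ι A M : Type*} [AddCommMonoid A] [CommMonoid M] (ψ : AddChar A M)
    (s : Finset ι) (f : ι → A) : ψ (∑ i ∈ s, f i) = ∏ i ∈ s, ψ (f i) := by
  induction s using Finset.cons_induction with
  | empty => simp
  | cons a s ha ih => rw [Finset.sum_cons, Finset.prod_cons, AddChar.map_add_eq_mul, ih]

namespace LinearMap.BilinForm

lemma IsAlt.sup_span_singleton_le_orthogonal {R M : Type*} [CommRing R] [AddCommGroup M]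
    [Module R M] {B : LinearMap.BilinForm R M} (hB : B.IsAlt) {W : Submodule R M}
    (hW : W ≤ B.orthogonal W) {v : M} (hv : v ∈ B.orthogonal W) :
    W ⊔ Submodule.span R {v} ≤ B.orthogonal (W ⊔ Submodule.span R {v}) := by
  intro x hx y hy
  obtain ⟨w, hw, _, hav, rfl⟩ := Submodule.mem_sup.mp hx
  obtain ⟨w', hw', _, hbv, rfl⟩ := Submodule.mem_sup.mp hy
  obtain ⟨a, rfl⟩ := Submodule.mem_span_singleton.mp hav
  obtain ⟨b, rfl⟩ := Submodule.mem_span_singleton.mp hbv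
  simp [hW hw w' hw', hv w' hw', hB.isRefl _ _ (hv w hw), hB.self_eq_zero]

lemma orthogonal_eq_self_of_finrank_le {K V : Type*} [Field K] [AddCommGroup V] [Module K V]
    [FiniteDimensional K V] {B : LinearMap.BilinForm K V} (hB : B.Nondegenerate)
    {W W' : Submodule K V} (hW : B.orthogonal W = W) (hW' : W' ≤ B.orthogonal W')
    (h : Module.finrank K W ≤ Module.finrank K W') : B.orthogonal W' = W' := by
  have hdimW := finrank_orthogonal hB W
  have hdimW' := finrank_orthogonal hB W'
  have := W.finrank_le
  rw [hW] at hdimW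
  exact (Submodule.eq_of_le_of_finrank_le hW' (by omega)).symm

end LinearMap.BilinForm

section TensorOp

variable {n : ℕ}

lemma tensorOp_mul (f g : Fin n → Matrix (Fin 2) (Fin 2) ℂ) :
    tensorOp f * tensorOp g = tensorOp fun i => f i * g i := by
  ext x y
  simp only [tensorOp, mul_apply, of_apply, Finset.prod_univ_sum, Fintype.piFinset_univ,
    Finset.prod_mul_distrib]

lemma tensorOp_smul (c : Fin n → ℂ) (f : Fin n → Matrix (Fin 2) (Fin 2) ℂ) :
    tensorOp (fun i => c i • f i) = (∏ i, c i) • tensorOp f := by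
  ext x y
  simp [tensorOp, Finset.prod_mul_distrib]

lemma conjTranspose_tensorOp (f : Fin n → Matrix (Fin 2) (Fin 2) ℂ) :
    (tensorOp f)ᴴ = tensorOp fun i => (f i)ᴴ := by
  ext x y
  simp [tensorOp, conjTranspose_apply]

lemma tensorOp_one : tensorOp (fun _ : Fin n => (1 : Matrix (Fin 2) (Fin 2) ℂ)) = 1 := by
  ext x y
  simp [tensorOp, one_apply, Finset.prod_ite_zero, funext_iff]

lemma trace_tensorOp (f : Fin n → Matrix (Fin 2) (Fin 2) ℂ) :
    (tensorOp f).trace = ∏ i, (f i).trace := by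
  simp only [trace, diag, tensorOp, of_apply, Finset.prod_univ_sum, Fintype.piFinset_univ]

end TensorOp

namespace Pauli

lemma I_pow_add_three_mul_mul (s t : ℕ) : I ^ (s + 3 * t) * I ^ t = I ^ s := by
  rw [← pow_add, show s + 3 * t + t = s + 4 * t by ring, pow_add, pow_mul, I_pow_four, one_pow,
    mul_one]

lemma star_I_pow (k : ℕ) : star (I ^ k) = I ^ (3 * k) := by
  rw [star_pow, pow_mul, I_pow_three, Complex.star_def, conj_I]

lemma zmod_two_cases (a : ZMod 2) : a = 0 ∨ a = 1 := by decide +revert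

/-- `(x, z)` labels `Xˣ Zᶻ` up to phase: `I, X, Y, Z` are `(0, 0), (1, 0), (1, 1), (0, 1)`. -/
def labelEquiv : ZMod 2 × ZMod 2 ≃ Fin 4 where
  toFun p := ![![0, 3], ![1, 2]] p.1 p.2
  invFun := ![(0, 0), (1, 0), (1, 1), (0, 1)]
  left_inv := by decide
  right_inv := by decide

noncomputable def sigma (p : ZMod 2 × ZMod 2) : Matrix (Fin 2) (Fin 2) ℂ := pauli1 (labelEquiv p)

def symplecticProd (p q : ZMod 2 × ZMod 2) : ZMod 2 := p.1 * q.2 + p.2 * q.1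

noncomputable def signChar : AddChar (ZMod 2) ℂ := AddChar.zmodChar 2 (ζ := -1) (by norm_num)

lemma signChar_one : signChar 1 = -1 := by
  rw [signChar, AddChar.zmodChar_apply, show (1 : ZMod 2).val = 1 from rfl, pow_one]

lemma signChar_eq_one_iff (b : ZMod 2) : signChar b = 1 ↔ b = 0 := by
  rcases zmod_two_cases b with rfl | rfl
  · simp
  · norm_num [signChar_one]

lemma pauli1_conjTranspose (a : Fin 4) : (pauli1 a)ᴴ = pauli1 a := by
  fin_cases a <;> ext x y <;> fin_cases x <;> fin_cases y <;> simp [pauli1, conjTranspose_apply]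

lemma pauli1_mul_self (a : Fin 4) : pauli1 a * pauli1 a = 1 := by
  fin_cases a <;> ext x y <;> fin_cases x <;> fin_cases y <;>
    simp [pauli1, mul_apply, Fin.sum_univ_two]

lemma trace_sigma {p : ZMod 2 × ZMod 2} (hp : p ≠ 0) : (sigma p).trace = 0 := by
  rw [← labelEquiv.injective.ne_iff, show labelEquiv 0 = 0 from rfl] at hp
  rw [sigma]
  generalize labelEquiv p = a at hp
  fin_cases a <;> simp_all [pauli1, trace, Fin.sum_univ_two]

lemma symplecticProd_symm_symm (a b : Fin 4) :
    symplecticProd (labelEquiv.symm a) (labelEquiv.symm b) =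
      if a = 0 ∨ b = 0 ∨ a = b then 0 else 1 := by
  decide +revert

lemma sigma_mul_comm (p q : ZMod 2 × ZMod 2) :
    sigma p * sigma q = signChar (symplecticProd p q) • (sigma q * sigma p) := by
  obtain ⟨a, rfl⟩ := labelEquiv.symm.surjective p
  obtain ⟨b, rfl⟩ := labelEquiv.symm.surjective q
  rw [symplecticProd_symm_symm]
  simp only [sigma, Equiv.apply_symm_apply]
  fin_cases a <;> fin_cases b <;> ext x y <;> fin_cases x <;> fin_cases y <;>
    simp [pauli1, signChar_one, mul_apply, Fin.sum_univ_two]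

lemma sigma_mul (p q : ZMod 2 × ZMod 2) : ∃ k : ℕ, sigma p * sigma q = I ^ k • sigma (p + q) := by
  obtain ⟨a, rfl⟩ := labelEquiv.symm.surjective p
  obtain ⟨b, rfl⟩ := labelEquiv.symm.surjective q
  -- labels add like the indices of the Klein four-group `{I, X, Y, Z}`
  have hadd : labelEquiv (labelEquiv.symm a + labelEquiv.symm b) =
      ![![0, 1, 2, 3], ![1, 0, 3, 2], ![2, 3, 0, 1], ![3, 2, 1, 0]] a b := by
    decide +revert
  simp only [sigma, Equiv.apply_symm_apply, hadd]
  fin_cases a <;> fin_cases b <;>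
    first
    | (refine ⟨0, ?_⟩; ext x y; fin_cases x <;> fin_cases y <;> simp [pauli1, mul_apply]; done)
    | (refine ⟨1, ?_⟩; ext x y; fin_cases x <;> fin_cases y <;> simp [pauli1, mul_apply]; done)
    | (refine ⟨3, ?_⟩; ext x y; fin_cases x <;> fin_cases y <;> simp [pauli1, mul_apply, pow_succ])

def symplecticForm (n : ℕ) : LinearMap.BilinForm (ZMod 2) (Fin n → ZMod 2 × ZMod 2) :=
  LinearMap.mk₂ (ZMod 2) (fun v w => ∑ i, symplecticProd (v i) (w i))
    (fun _ _ _ => by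
      simp only [symplecticProd, Pi.add_apply, Prod.fst_add, Prod.snd_add,
        ← Finset.sum_add_distrib]
      exact Finset.sum_congr rfl fun _ _ => by ring)
    (fun _ _ _ => by
      simp only [symplecticProd, Pi.smul_apply, Prod.smul_fst, Prod.smul_snd, smul_eq_mul,
        Finset.mul_sum]
      exact Finset.sum_congr rfl fun _ _ => by ring)
    (fun _ _ _ => by
      simp only [symplecticProd, Pi.add_apply, Prod.fst_add, Prod.snd_add,
        ← Finset.sum_add_distrib]
      exact Finset.sum_congr rfl fun _ _ => by ring)
    (fun _ _ _ => by
      simp only [symplecticProd, Pi.smul_apply, Prod.smul_fst, Prod.smul_snd, smul_eq_mul,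
        Finset.mul_sum]
      exact Finset.sum_congr rfl fun _ _ => by ring)

variable {n : ℕ}

lemma symplecticForm_apply (v w : Fin n → ZMod 2 × ZMod 2) :
    symplecticForm n v w = ∑ i, symplecticProd (v i) (w i) := rfl

lemma symplecticForm_isAlt : (symplecticForm n).IsAlt := fun v => by
  simp [symplecticForm_apply, symplecticProd, mul_comm (v _).2, ZModModule.add_self]

lemma symplecticForm_single (v : Fin n → ZMod 2 × ZMod 2) (i : Fin n) (p : ZMod 2 × ZMod 2) :
    symplecticForm n v (Pi.single i p) = symplecticProd (v i) p := by
  rw [symplecticForm_apply,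
    Fintype.sum_eq_single i fun j hj => by simp [Pi.single_eq_of_ne hj, symplecticProd],
    Pi.single_eq_same]

lemma symplecticForm_nondegenerate : (symplecticForm n).Nondegenerate := by
  refine symplecticForm_isAlt.isRefl.nondegenerate_iff_separatingLeft.mpr fun v hv => ?_
  funext i
  have hX := hv (Pi.single i (1, 0))
  have hZ := hv (Pi.single i (0, 1))
  simp only [symplecticForm_single, symplecticProd, mul_zero, mul_one, zero_add, add_zero] at hX hZ
  exact Prod.ext hZ hX

noncomputable def op (v : Fin n → ZMod 2 × ZMod 2) : Matrix (Q n) (Q n) ℂ :=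
  tensorOp fun i => sigma (v i)

lemma op_zero : op (0 : Fin n → ZMod 2 × ZMod 2) = 1 := tensorOp_one

lemma op_mul_self (v : Fin n → ZMod 2 × ZMod 2) : op v * op v = 1 := by
  simp only [op, sigma, tensorOp_mul, pauli1_mul_self, tensorOp_one]

lemma conjTranspose_op (v : Fin n → ZMod 2 × ZMod 2) : (op v)ᴴ = op v := by
  simp only [op, sigma, conjTranspose_tensorOp, pauli1_conjTranspose]

lemma trace_op {v : Fin n → ZMod 2 × ZMod 2} (hv : v ≠ 0) : (op v).trace = 0 := by
  obtain ⟨i, hi⟩ := Function.ne_iff.mp hv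
  rw [op, trace_tensorOp]
  exact Finset.prod_eq_zero (Finset.mem_univ i) (trace_sigma hi)

lemma op_mul (v w : Fin n → ZMod 2 × ZMod 2) : ∃ k : ℕ, op v * op w = I ^ k • op (v + w) := by
  choose k hk using fun i => sigma_mul (v i) (w i)
  refine ⟨∑ i, k i, ?_⟩
  simp only [op, tensorOp_mul, hk, tensorOp_smul, Finset.prod_pow_eq_pow_sum, Pi.add_apply]

lemma op_mul_op_ne_zero (v w : Fin n → ZMod 2 × ZMod 2) : op v * op w ≠ 0 := by
  intro h
  have h1 : op v * op w * (op w * op v) = 1 := by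
    rw [mul_assoc, ← mul_assoc (op w), op_mul_self, one_mul, op_mul_self]
  rw [h, zero_mul] at h1
  exact zero_ne_one h1

lemma op_mul_comm (v w : Fin n → ZMod 2 × ZMod 2) :
    op v * op w = signChar (symplecticForm n v w) • (op w * op v) := by
  simp only [op, tensorOp_mul]
  rw [funext fun i => sigma_mul_comm (v i) (w i), tensorOp_smul, symplecticForm_apply,
    AddChar.map_sum_eq_prod]

lemma smul_op_mul_comm_iff {c d : ℂ} (hc : c ≠ 0) (hd : d ≠ 0) (v w : Fin n → ZMod 2 × ZMod 2) :
    c • op v * (d • op w) = d • op w * (c • op v) ↔ symplecticForm n v w = 0 := by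
  rw [smul_mul_smul_comm, smul_mul_smul_comm, mul_comm d, smul_right_inj (mul_ne_zero hc hd),
    op_mul_comm, ← signChar_eq_one_iff]
  conv_rhs => rw [← (smul_left_injective ℂ (op_mul_op_ne_zero w v)).eq_iff]
  simp only [one_smul]

lemma smul_op_injective {c d : ℂ} (hd : d ≠ 0) {v w : Fin n → ZMod 2 × ZMod 2}
    (h : c • op v = d • op w) : v = w := by
  by_contra hvw
  have hsum : v + w ≠ 0 := by
    rwa [Ne, add_eq_zero_iff_eq_neg, ZModModule.neg_eq_self]
  obtain ⟨k, hk⟩ := op_mul v w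
  have htr := congrArg trace (congrArg (· * op w) h)
  simp only [smul_mul_assoc, op_mul_self, hk, trace_smul, trace_op hsum, trace_one,
    smul_zero] at htr
  exact hd (by simpa using htr.symm)

lemma mem_pauliGroup_iff {M : Matrix (Q n) (Q n) ℂ} :
    M ∈ PauliGroup n ↔ ∃ (k : ℕ) (v : Fin n → ZMod 2 × ZMod 2), M = I ^ k • op v := by
  constructor
  · rintro ⟨s, f, rfl⟩
    exact ⟨s, fun i => labelEquiv.symm (f i), by simp [op, sigma]⟩
  · rintro ⟨k, v, rfl⟩
    exact ⟨⟨k % 4, Nat.mod_lt _ (by norm_num)⟩, fun i => labelEquiv (v i), by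
      rw [I_pow_eq_pow_mod]; rfl⟩

def subgroupOf (W : Submodule (ZMod 2) (Fin n → ZMod 2 × ZMod 2)) : Set (Matrix (Q n) (Q n) ℂ) :=
  {M | ∃ k : ℕ, ∃ v ∈ W, M = I ^ k • op v}

lemma isPauliSubgroup_subgroupOf (W : Submodule (ZMod 2) (Fin n → ZMod 2 × ZMod 2)) :
    IsPauliSubgroup n (subgroupOf W) := by
  refine ⟨?_, ⟨0, 0, W.zero_mem, by rw [pow_zero, one_smul, op_zero]⟩, ?_, ?_⟩
  · rintro _ ⟨k, v, -, rfl⟩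
    exact mem_pauliGroup_iff.mpr ⟨k, v, rfl⟩
  · rintro _ ⟨s, v, hv, rfl⟩ _ ⟨t, w, hw, rfl⟩
    obtain ⟨k, hk⟩ := op_mul v w
    exact ⟨s + t + k, v + w, W.add_mem hv hw, by
      rw [smul_mul_smul_comm, hk, smul_smul, pow_add, pow_add]⟩
  · rintro _ ⟨k, v, hv, rfl⟩
    exact ⟨3 * k, v, hv, by rw [conjTranspose_smul, conjTranspose_op, star_I_pow]⟩

lemma subgroupOf_mul_comm {W : Submodule (ZMod 2) (Fin n → ZMod 2 × ZMod 2)}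
    (hW : W ≤ (symplecticForm n).orthogonal W) :
    ∀ A ∈ subgroupOf W, ∀ B ∈ subgroupOf W, A * B = B * A := by
  rintro _ ⟨s, v, hv, rfl⟩ _ ⟨t, w, hw, rfl⟩
  exact (smul_op_mul_comm_iff (pow_ne_zero _ I_ne_zero) (pow_ne_zero _ I_ne_zero) v w).mpr
    (hW hw v hv)

end Pauli

open Pauli

section Subgroups

variable {n : ℕ}

namespace IsPauliSubgroup

variable {K : Set (Matrix (Q n) (Q n) ℂ)} (hK : IsPauliSubgroup n K)

def support : Submodule (ZMod 2) (Fin n → ZMod 2 × ZMod 2) where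
  carrier := {v | ∃ k : ℕ, I ^ k • op v ∈ K}
  add_mem' := by
    rintro v w ⟨s, hs⟩ ⟨t, ht⟩
    obtain ⟨k, hk⟩ := op_mul v w
    refine ⟨s + t + k, ?_⟩
    simpa only [smul_mul_smul_comm, hk, smul_smul, pow_add] using hK.2.2.1 _ hs _ ht
  zero_mem' := ⟨0, by simpa only [pow_zero, one_smul, op_zero] using hK.2.1⟩
  smul_mem' c v hv := by
    rcases zmod_two_cases c with rfl | rfl
    · exact ⟨0, by simpa only [zero_smul, pow_zero, one_smul, op_zero] using hK.2.1⟩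
    · simpa only [one_smul] using hv

include hK

lemma subset_subgroupOf_support : K ⊆ subgroupOf hK.support := by
  intro A hA
  obtain ⟨k, v, rfl⟩ := mem_pauliGroup_iff.mp (hK.1 hA)
  exact ⟨k, v, ⟨k, hA⟩, rfl⟩

lemma support_le_orthogonal (hab : ∀ A ∈ K, ∀ B ∈ K, A * B = B * A) :
    hK.support ≤ (symplecticForm n).orthogonal hK.support := by
  rintro w ⟨t, hw⟩ v ⟨s, hv⟩
  exact (smul_op_mul_comm_iff (pow_ne_zero _ I_ne_zero) (pow_ne_zero _ I_ne_zero) v w).mp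
    (hab _ hv _ hw)

lemma subgroupOf_support_subset (hphase : ∀ A ∈ K, ∀ k : ℕ, I ^ k • A ∈ K) :
    subgroupOf hK.support ⊆ K := by
  rintro _ ⟨s, v, ⟨t, hv⟩, rfl⟩
  simpa only [smul_smul, I_pow_add_three_mul_mul] using hphase _ hv (s + 3 * t)

lemma isMaxAbelian_of_orthogonal_support_le (hab : ∀ A ∈ K, ∀ B ∈ K, A * B = B * A)
    (hphase : ∀ A ∈ K, ∀ k : ℕ, I ^ k • A ∈ K)
    (horth : (symplecticForm n).orthogonal hK.support ≤ hK.support) : IsMaxAbelian n K := by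
  refine ⟨hK, hab, fun G hG habG hKG A hA => ?_⟩
  obtain ⟨s, v, rfl⟩ := mem_pauliGroup_iff.mp (hG.1 hA)
  refine hK.subgroupOf_support_subset hphase ⟨s, v, horth fun w ⟨t, hw⟩ => ?_, rfl⟩
  exact (smul_op_mul_comm_iff (pow_ne_zero _ I_ne_zero) (pow_ne_zero _ I_ne_zero) w v).mp
    (habG _ (hKG hw) _ hA)

lemma finrank_support_le {H : Set (Matrix (Q n) (Q n) ℂ)} (hH : IsPauliSubgroup n H)
    {F : Type*} [FunLike F (Matrix (Q n) (Q n) ℂ) (Matrix (Q n) (Q n) ℂ)]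
    [LinearMapClass F ℂ (Matrix (Q n) (Q n) ℂ) (Matrix (Q n) (Q n) ℂ)] (f : F)
    (hf : Function.Injective f) (hfKH : f '' K ⊆ H) :
    Module.finrank (ZMod 2) hK.support ≤ Module.finrank (ZMod 2) hH.support := by
  have key : ∀ v : hK.support, ∃ (w : hH.support) (s t : ℕ),
      f (I ^ s • op (v : Fin n → ZMod 2 × ZMod 2)) = I ^ t • op (w : Fin n → ZMod 2 × ZMod 2) := by
    rintro ⟨v, s, hv⟩
    have hfv := hfKH ⟨_, hv, rfl⟩
    obtain ⟨t, w, hw⟩ := mem_pauliGroup_iff.mp (hH.1 hfv)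
    exact ⟨⟨w, t, hw ▸ hfv⟩, s, t, hw⟩
  choose φ s t hφ using key
  have hφ_inj : Function.Injective φ := by
    intro v v' h
    have : f ((I ^ (t v' + 3 * t v) * I ^ s v) • op (v : Fin n → ZMod 2 × ZMod 2)) =
        f (I ^ s v' • op (v' : Fin n → ZMod 2 × ZMod 2)) := by
      rw [← smul_smul, map_smul, hφ, hφ, h, smul_smul, I_pow_add_three_mul_mul]
    exact Subtype.ext (smul_op_injective (pow_ne_zero _ I_ne_zero) (hf this))
  have hcard := Nat.card_le_card_of_injective φ hφ_inj
  rwa [Module.natCard_eq_pow_finrank (K := ZMod 2) (V := hK.support),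
    Module.natCard_eq_pow_finrank (K := ZMod 2) (V := hH.support),
    Nat.card_zmod, Nat.pow_le_pow_iff_right (by norm_num)] at hcard

end IsPauliSubgroup

namespace IsMaxAbelian

variable {G : Set (Matrix (Q n) (Q n) ℂ)} (hG : IsMaxAbelian n G)
include hG

lemma subgroupOf_support : subgroupOf hG.1.support = G :=
  Set.Subset.antisymm
    (hG.2.2 _ (isPauliSubgroup_subgroupOf _)
      (subgroupOf_mul_comm (hG.1.support_le_orthogonal hG.2.1)) hG.1.subset_subgroupOf_support)
    hG.1.subset_subgroupOf_support

lemma smul_mem {A : Matrix (Q n) (Q n) ℂ} (hA : A ∈ G) (k : ℕ) : I ^ k • A ∈ G := by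
  rw [← hG.subgroupOf_support] at hA ⊢
  obtain ⟨s, v, hv, rfl⟩ := hA
  exact ⟨k + s, v, hv, by rw [smul_smul, pow_add]⟩

lemma orthogonal_support : (symplecticForm n).orthogonal hG.1.support = hG.1.support := by
  have hiso := hG.1.support_le_orthogonal hG.2.1
  refine le_antisymm (fun v hv => ?_) hiso
  -- adjoining `v` keeps the label space isotropic, so maximality puts `op v` in `G`
  set W := hG.1.support ⊔ Submodule.span (ZMod 2) {v}
  have hW : W ≤ (symplecticForm n).orthogonal W :=
    symplecticForm_isAlt.sup_span_singleton_le_orthogonal hiso hv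
  have hGW : G ⊆ subgroupOf W := by
    rw [← hG.subgroupOf_support]
    rintro _ ⟨k, w, hw, rfl⟩
    exact ⟨k, w, Submodule.mem_sup_left hw, rfl⟩
  have hv' := hG.2.2 _ (isPauliSubgroup_subgroupOf W) (subgroupOf_mul_comm hW) hGW
    ⟨0, v, Submodule.mem_sup_right (Submodule.mem_span_singleton_self v), rfl⟩
  exact ⟨0, hv'⟩

theorem image_starAlgEquiv (f : Matrix (Q n) (Q n) ℂ ≃⋆ₐ[ℂ] Matrix (Q n) (Q n) ℂ)
    (hf : f '' G ⊆ PauliGroup n) : IsMaxAbelian n (f '' G) := by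
  have hH : IsPauliSubgroup n (f '' G) := by
    refine ⟨hf, ⟨1, hG.1.2.1, map_one f⟩, ?_, ?_⟩
    · rintro _ ⟨A, hA, rfl⟩ _ ⟨B, hB, rfl⟩
      exact ⟨A * B, hG.1.2.2.1 A hA B hB, map_mul f A B⟩
    · rintro _ ⟨A, hA, rfl⟩
      exact ⟨Aᴴ, hG.1.2.2.2 A hA, map_star f A⟩
  have hab : ∀ A ∈ f '' G, ∀ B ∈ f '' G, A * B = B * A := by
    rintro _ ⟨A, hA, rfl⟩ _ ⟨B, hB, rfl⟩
    rw [← map_mul, ← map_mul, hG.2.1 A hA B hB]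
  have hphase : ∀ A ∈ f '' G, ∀ k : ℕ, I ^ k • A ∈ f '' G := by
    rintro _ ⟨A, hA, rfl⟩ k
    exact ⟨_, hG.smul_mem hA k, map_smul f _ _⟩
  refine hH.isMaxAbelian_of_orthogonal_support_le hab hphase
    (LinearMap.BilinForm.orthogonal_eq_self_of_finrank_le symplecticForm_nondegenerate
      hG.orthogonal_support (hH.support_le_orthogonal hab) ?_).le
  exact hG.1.finrank_support_le hH f f.injective subset_rfl

end IsMaxAbelian

end Subgroups

theorem semiClifford_iff_image_contains_maxAbelian_general (n : ℕ)
    (U : Matrix (Q n) (Q n) ℂ)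
    (hU : U ∈ Matrix.unitaryGroup (Q n) ℂ) :
    SemiClifford n U ↔
      ∃ G, IsMaxAbelian n G ∧
        G ⊆ ((fun A => U * A * Uᴴ) '' PauliGroup n) ∩ PauliGroup n := by
  let f := Unitary.conjStarAlgAut ℂ _ ⟨U, hU⟩
  have hf : ⇑f = fun A => U * A * Uᴴ := rfl
  constructor
  · rintro ⟨-, G, hG, hUG⟩
    exact ⟨_, hUG, fun _ ⟨A, hA, hUA⟩ => ⟨⟨A, hG.1.1 hA, hUA⟩, hUG.1.1 ⟨A, hA, hUA⟩⟩⟩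
  · rintro ⟨G, hG, hGsub⟩
    have hfG : f.symm '' G ⊆ PauliGroup n := by
      rintro _ ⟨A, hA, rfl⟩
      obtain ⟨P, hP, rfl⟩ := (hGsub hA).1
      rwa [← hf, f.symm_apply_apply]
    refine ⟨hU, f.symm '' G, hG.image_starAlgEquiv f.symm hfG, ?_⟩
    rwa [← hf, Set.image_image, funext f.apply_symm_apply, Set.image_id']

/-- a unitary `U ∈ C_k` is semi-Clifford iff `(U P_n U†) ∩ P_n`
contains a maximal abelian subgroup of the Pauli group. -/
theorem semiClifford_iff_image_contains_maxAbelian (n k : ℕ)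
    (U : Matrix (Q n) (Q n) ℂ)
    (hU : U ∈ Matrix.unitaryGroup (Q n) ℂ) (hUk : U ∈ Ck n k) :
    SemiClifford n U ↔
      ∃ G, IsMaxAbelian n G ∧
        G ⊆ ((fun A => U * A * Uᴴ) '' PauliGroup n) ∩ PauliGroup n :=
  semiClifford_iff_image_contains_maxAbelian_general n U hU
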